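/- Let C be a non-degenerate normalized class adjacency matrix with ∑_i c_ii < 1, let i be an index such that there exists j ≠ i with c_jj > 0, and let 0 < ε < 1. Then h_unb((1−ε)·C + ε·E_ii) > h_unb(C) (homo-monotonicity of h_unb outside the special case where only class i has intra-edges). -/

import Mathlib

/-- A normalized class adjacency matrix: symmetric, nonnegative entries, entries sum to 1. -/
def IsNCAM {m : ℕ} (C : Matrix (Fin m) (Fin m) ℝ) : Prop :=
  (∀ i j, C i j = C j i) ∧ (∀ i j, 0 ≤ C i j) ∧ (∑ i : Fin m, ∑ j : Fin m, C i j = 1)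

/-- Non-degenerate: at least two nonzero entries. -/
def Nondeg {m : ℕ} (C : Matrix (Fin m) (Fin m) ℝ) : Prop :=
  ∃ p q : Fin m × Fin m, p ≠ q ∧ C p.1 p.2 ≠ 0 ∧ C q.1 q.2 ≠ 0

/-- Unbiased homophily (α = 0). -/
noncomputable def hUnb {m : ℕ} (C : Matrix (Fin m) (Fin m) ℝ) : ℝ :=
  (∑ i : Fin m, ∑ j : Fin m, if i < j then Real.sqrt (C i i * C j j) - C i j else 0) /
  (∑ i : Fin m, ∑ j : Fin m, if i < j then Real.sqrt (C i i * C j j) + C i j else 0)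

/-- Unbiased homophily with parameter α. -/
noncomputable def hUnbAlpha {m : ℕ} (α : ℝ) (C : Matrix (Fin m) (Fin m) ℝ) : ℝ :=
  hUnb C + α * min (∑ i : Fin m, Real.sqrt (C i i)) 1

private lemma split_sub {m : ℕ} (f g : Fin m → Fin m → ℝ) :
    (∑ k : Fin m, ∑ l : Fin m, if k < l then f k l - g k l else 0)
    = (∑ k : Fin m, ∑ l : Fin m, if k < l then f k l else 0)
      - (∑ k : Fin m, ∑ l : Fin m, if k < l then g k l else 0) := by
  rw [← Finset.sum_sub_distrib]
  refine Finset.sum_congr rfl fun k _ => ?_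
  rw [← Finset.sum_sub_distrib]
  refine Finset.sum_congr rfl fun l _ => ?_
  split <;> simp

private lemma split_add {m : ℕ} (f g : Fin m → Fin m → ℝ) :
    (∑ k : Fin m, ∑ l : Fin m, if k < l then f k l + g k l else 0)
    = (∑ k : Fin m, ∑ l : Fin m, if k < l then f k l else 0)
      + (∑ k : Fin m, ∑ l : Fin m, if k < l then g k l else 0) := by
  rw [← Finset.sum_add_distrib]
  refine Finset.sum_congr rfl fun k _ => ?_
  rw [← Finset.sum_add_distrib]
  refine Finset.sum_congr rfl fun l _ => ?_
  split <;> simp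

private lemma frac_mono {s t a : ℝ} (ha : 0 < a) (hs : 0 ≤ s) (hst : s < t) :
    (s - a) / (s + a) < (t - a) / (t + a) := by
  rw [div_lt_div_iff₀ (by linarith) (by linarith)]
  nlinarith

/-- homo-monotonicity of h_unb outside the special case
where only class i has intra-edges. -/
theorem homo_monotonicity_unb {m : ℕ}
    (C : Matrix (Fin m) (Fin m) ℝ) (hC : IsNCAM C) (hnd : Nondeg C)
    (hdiag : ∑ k : Fin m, C k k < 1) (i : Fin m)
    (hj : ∃ j : Fin m, j ≠ i ∧ 0 < C j j)
    (ε : ℝ) (hε0 : 0 < ε) (hε1 : ε < 1) :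
    hUnb ((1 - ε) • C + ε • Matrix.single i i (1 : ℝ)) > hUnb C := by
  obtain ⟨hsym, hnn, hsum⟩ := hC
  obtain ⟨j, hji, hjj⟩ := hj
  have h1ε : (0:ℝ) < 1 - ε := by linarith
  set C' := (1 - ε) • C + ε • Matrix.single i i (1 : ℝ) with hC'def
  have hC'app : ∀ k l, C' k l = (1 - ε) * C k l + (if i = k ∧ i = l then ε else 0) := by
    intro k l
    simp [hC'def, Matrix.add_apply, Matrix.smul_apply, Matrix.single,
      Matrix.of_apply, smul_eq_mul, mul_ite, mul_one, mul_zero]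
  set S := ∑ k : Fin m, ∑ l : Fin m, if k < l then Real.sqrt (C k k * C l l) else 0 with hS
  set O := ∑ k : Fin m, ∑ l : Fin m, if k < l then C k l else 0 with hO
  set S' := ∑ k : Fin m, ∑ l : Fin m, if k < l then Real.sqrt (C' k k * C' l l) else 0 with hS'
  -- O > 0
  have hswap : (∑ k : Fin m, ∑ l : Fin m, if l < k then C k l else 0) = O := by
    rw [Finset.sum_comm, hO]
    refine Finset.sum_congr rfl fun k _ => Finset.sum_congr rfl fun l _ => ?_
    rw [hsym]
  have htri : (1:ℝ) = O + O + ∑ k : Fin m, C k k := by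
    calc (1:ℝ) = ∑ k : Fin m, ∑ l : Fin m, C k l := hsum.symm
      _ = ∑ k : Fin m, ∑ l : Fin m, ((if k < l then C k l else 0)
            + (if l < k then C k l else 0) + (if k = l then C k l else 0)) := by
          refine Finset.sum_congr rfl fun k _ => Finset.sum_congr rfl fun l _ => ?_
          rcases lt_trichotomy k l with h | h | h
          · simp [h, h.ne, not_lt_of_gt h]
          · subst h; simp
          · simp [h, h.ne', not_lt_of_gt h]
      _ = (∑ k : Fin m, ∑ l : Fin m, if k < l then C k l else 0)
            + (∑ k : Fin m, ∑ l : Fin m, if l < k then C k l else 0)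
            + (∑ k : Fin m, ∑ l : Fin m, if k = l then C k l else 0) := by
          simp only [Finset.sum_add_distrib]
      _ = O + O + ∑ k : Fin m, C k k := by
          rw [← hO, hswap]
          congr 1
          exact Finset.sum_congr rfl fun k _ => by simp
  have hOpos : 0 < O := by linarith
  have hSnn : 0 ≤ S := by
    refine Finset.sum_nonneg fun k _ => Finset.sum_nonneg fun l _ => ?_
    split
    · exact Real.sqrt_nonneg _
    · exact le_rfl
  -- diagonal bounds for C'
  have hdiag_le : ∀ k, (1 - ε) * C k k ≤ C' k k := by
    intro k; rw [hC'app]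
    have : (0:ℝ) ≤ if i = k ∧ i = k then ε else 0 := by split <;> [exact hε0.le; exact le_rfl]
    linarith
  have hdiag_nn : ∀ k, 0 ≤ C' k k := fun k =>
    le_trans (mul_nonneg h1ε.le (hnn k k)) (hdiag_le k)
  -- off-diagonal sum of C'
  have hO' : (∑ k : Fin m, ∑ l : Fin m, if k < l then C' k l else 0) = (1 - ε) * O := by
    rw [hO, Finset.mul_sum]
    refine Finset.sum_congr rfl fun k _ => ?_
    rw [Finset.mul_sum]
    refine Finset.sum_congr rfl fun l _ => ?_
    split
    · next h =>
      rw [hC'app, if_neg, add_zero]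
      rintro ⟨rfl, rfl⟩; exact lt_irrefl _ h
    · simp
  -- pointwise inequality on sqrt terms
  have hle : ∀ k l : Fin m,
      (1 - ε) * (if k < l then Real.sqrt (C k k * C l l) else 0)
        ≤ (if k < l then Real.sqrt (C' k k * C' l l) else 0) := by
    intro k l
    split
    · have hrw : (1 - ε) * Real.sqrt (C k k * C l l)
          = Real.sqrt ((1 - ε) * C k k * ((1 - ε) * C l l)) := by
        rw [show (1 - ε) * C k k * ((1 - ε) * C l l) = (1 - ε) ^ 2 * (C k k * C l l) by ring,
          Real.sqrt_mul (sq_nonneg _), Real.sqrt_sq h1ε.le]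
      rw [hrw]
      apply Real.sqrt_le_sqrt
      exact mul_le_mul (hdiag_le k) (hdiag_le l) (mul_nonneg h1ε.le (hnn l l)) (hdiag_nn k)
    · simp
  -- strict inequality at the witness pair
  have hCii' : C' i i = (1 - ε) * C i i + ε := by rw [hC'app]; simp
  have hCjj' : C' j j = (1 - ε) * C j j := by
    rw [hC'app, if_neg, add_zero]
    rintro ⟨rfl, -⟩; exact hji rfl
  have hrw2 : ∀ a b : Fin m, (1 - ε) * Real.sqrt (C a a * C b b)
      = Real.sqrt ((1 - ε) * C a a * ((1 - ε) * C b b)) := by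
    intro a b
    rw [show (1 - ε) * C a a * ((1 - ε) * C b b) = (1 - ε) ^ 2 * (C a a * C b b) by ring,
      Real.sqrt_mul (sq_nonneg _), Real.sqrt_sq h1ε.le]
  have hstrict : ∃ p ∈ Finset.univ ×ˢ (Finset.univ : Finset (Fin m)),
      (1 - ε) * (if p.1 < p.2 then Real.sqrt (C p.1 p.1 * C p.2 p.2) else 0)
        < (if p.1 < p.2 then Real.sqrt (C' p.1 p.1 * C' p.2 p.2) else 0) := by
    have hkey : 0 < ε * ((1 - ε) * C j j) := by positivity
    rcases hji.lt_or_gt with h | h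
    · -- j < i, use pair (j, i)
      refine ⟨(j, i), by simp, ?_⟩
      simp only [h, if_pos]
      rw [hrw2 j i]
      apply Real.sqrt_lt_sqrt
        (mul_nonneg (mul_nonneg h1ε.le (hnn j j)) (mul_nonneg h1ε.le (hnn i i)))
      rw [hCii', hCjj']
      nlinarith [hkey]
    · -- i < j, use pair (i, j)
      refine ⟨(i, j), by simp, ?_⟩
      simp only [h, if_pos]
      rw [hrw2 i j]
      apply Real.sqrt_lt_sqrt
        (mul_nonneg (mul_nonneg h1ε.le (hnn i i)) (mul_nonneg h1ε.le (hnn j j)))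
      rw [hCii', hCjj']
      nlinarith [hkey]
  have hprod : ∀ f : Fin m → Fin m → ℝ,
      (∑ p ∈ Finset.univ ×ˢ (Finset.univ : Finset (Fin m)), f p.1 p.2)
        = ∑ k : Fin m, ∑ l : Fin m, f k l := fun f => Finset.sum_product _ _ _
  have hS'gt : (1 - ε) * S < S' := by
    have h2 := Finset.sum_lt_sum (s := Finset.univ ×ˢ (Finset.univ : Finset (Fin m)))
      (f := fun p => (1 - ε) * (if p.1 < p.2 then Real.sqrt (C p.1 p.1 * C p.2 p.2) else 0))
      (g := fun p => (if p.1 < p.2 then Real.sqrt (C' p.1 p.1 * C' p.2 p.2) else 0))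
      (fun p _ => hle p.1 p.2) hstrict
    rw [hprod (fun k l => (1 - ε) * (if k < l then Real.sqrt (C k k * C l l) else 0)),
      hprod (fun k l => (if k < l then Real.sqrt (C' k k * C' l l) else 0))] at h2
    calc (1 - ε) * S
        = ∑ k : Fin m, ∑ l : Fin m,
            (1 - ε) * (if k < l then Real.sqrt (C k k * C l l) else 0) := by
          rw [hS, Finset.mul_sum]
          exact Finset.sum_congr rfl fun k _ => by rw [Finset.mul_sum]
      _ < S' := h2
  -- conclude
  have hnum : hUnb C = (S - O) / (S + O) := by
    rw [hUnb]
    exact congrArg₂ (· / ·) (split_sub (fun k l => Real.sqrt (C k k * C l l)) (fun k l => C k l))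
      (split_add (fun k l => Real.sqrt (C k k * C l l)) (fun k l => C k l))
  have hnum' : hUnb C' = (S' - (1 - ε) * O) / (S' + (1 - ε) * O) := by
    rw [hUnb, ← hO']
    exact congrArg₂ (· / ·) (split_sub (fun k l => Real.sqrt (C' k k * C' l l)) (fun k l => C' k l))
      (split_add (fun k l => Real.sqrt (C' k k * C' l l)) (fun k l => C' k l))
  rw [hnum, hnum', gt_iff_lt]
  have hkey : ((1 - ε) * S - (1 - ε) * O) / ((1 - ε) * S + (1 - ε) * O) = (S - O) / (S + O) := by
    rw [show (1 - ε) * S - (1 - ε) * O = (1 - ε) * (S - O) by ring,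
      show (1 - ε) * S + (1 - ε) * O = (1 - ε) * (S + O) by ring,
      mul_div_mul_left _ _ h1ε.ne']
  rw [← hkey]
  exact frac_mono (by positivity) (by positivity) hS'gt
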